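/- Let F = T_2^{≥1}, the 2×3 matrix with columns (0,1)^T, (1,0)^T, (1,1)^T. Then for every n ≥ 2, sat(n, F) = forb(n, F) = n + 1. -/
import Mathlib


/-- `F` is a submatrix of `M` (up to row/column permutations): there are injections
selecting rows and columns of `M` giving `F`. -/
def IsSubmatrix {α : Type*} {k c n m : ℕ} (F : Fin k → Fin c → α) (M : Fin n → Fin m → α) :
    Prop :=
  ∃ r : Fin k → Fin n, ∃ s : Fin c → Fin m,
    Function.Injective r ∧ Function.Injective s ∧ ∀ i j, M (r i) (s j) = F i j

/-- A matrix is simple if its columns are pairwise distinct. -/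
def Simple' {α : Type*} {n m : ℕ} (M : Fin n → Fin m → α) : Prop :=
  ∀ j₁ j₂ : Fin m, (∀ i, M i j₁ = M i j₂) → j₁ = j₂

/-- `C` occurs as a column of `M`. -/
def IsCol {α : Type*} {n m : ℕ} (M : Fin n → Fin m → α) (C : Fin n → α) : Prop :=
  ∃ j, ∀ i, M i j = C i

/-- The matrix `[M, C]` obtained by appending the column `C` to `M`. -/
def addCol {α : Type*} {n m : ℕ} (M : Fin n → Fin m → α) (C : Fin n → α) :
    Fin n → Fin (m + 1) → α :=
  fun i j => if h : (j : ℕ) < m then M i ⟨j, h⟩ else C i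

/-- `M` is `F`-saturated: simple, `F`-free, and adding any missing column creates `F`. -/
def Saturated {α : Type*} {k c n m : ℕ} (F : Fin k → Fin c → α) (M : Fin n → Fin m → α) :
    Prop :=
  Simple' M ∧ ¬ IsSubmatrix F M ∧
    ∀ C : Fin n → α, ¬ IsCol M C → IsSubmatrix F (addCol M C)

/-- The set of sizes (numbers of columns) of `F`-saturated `n`-row matrices. -/
def satSet {α : Type*} {k c : ℕ} (F : Fin k → Fin c → α) (n : ℕ) : Set ℕ :=
  {m | ∃ M : Fin n → Fin m → α, Saturated F M}

/-- The set of sizes of simple `F`-free `n`-row matrices. -/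
def forbSet {α : Type*} {k c : ℕ} (F : Fin k → Fin c → α) (n : ℕ) : Set ℕ :=
  {m | ∃ M : Fin n → Fin m → α, Simple' M ∧ ¬ IsSubmatrix F M}

/-- `K_k`: the `k × 2^k` 0-1 matrix of all distinct 0-1 columns of length `k`. -/
def Kfull (k : ℕ) : Fin k → Fin (2 ^ k) → Bool :=
  fun i j => Nat.testBit j.val i.val

def T2ge1 : Fin 2 → Fin 3 → Bool := ![![false, true, true], ![true, false, true]]

def SubRow {n m : ℕ} (M : Fin n → Fin m → Bool) (i j : Fin n) : Prop :=
  ∀ c, M i c = true → M j c = true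

lemma hasF_iff {n m : ℕ} (M : Fin n → Fin m → Bool) :
    IsSubmatrix T2ge1 M ↔ ∃ i j, i ≠ j ∧
      (∃ a, M i a = false ∧ M j a = true) ∧
      (∃ b, M i b = true ∧ M j b = false) ∧
      (∃ c, M i c = true ∧ M j c = true) := by
  constructor
  · rintro ⟨r, s, hr, hs, h⟩
    refine ⟨r 0, r 1, fun he => by simpa using hr he,
      ⟨s 0, ?_, ?_⟩, ⟨s 1, ?_, ?_⟩, ⟨s 2, ?_, ?_⟩⟩ <;>
      simp [h, T2ge1]
  · rintro ⟨i, j, hij, ⟨a, ha1, ha2⟩, ⟨b, hb1, hb2⟩, ⟨c, hc1, hc2⟩⟩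
    refine ⟨![i, j], ![a, b, c], ?_, ?_, ?_⟩
    · intro x y hxy
      fin_cases x <;> fin_cases y <;> simp_all
    · intro x y hxy
      fin_cases x <;> fin_cases y <;> simp_all
    · intro x y
      fin_cases x <;> fin_cases y <;> simp_all [T2ge1]

lemma L1 {n m : ℕ} {M : Fin n → Fin m → Bool} (hF : ¬ IsSubmatrix T2ge1 M)
    {i j : Fin n} (hij : i ≠ j) {c : Fin m} (hic : M i c = true) (hjc : M j c = true) :
    SubRow M i j ∨ SubRow M j i := by
  by_contra h
  push_neg at h
  obtain ⟨h1, h2⟩ := h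
  simp only [SubRow, not_forall] at h1 h2
  obtain ⟨a, ha1, ha2⟩ := h1
  obtain ⟨b, hb1, hb2⟩ := h2
  exact hF ((hasF_iff M).mpr ⟨i, j, hij, ⟨b, by simpa using hb2, hb1⟩,
    ⟨a, ha1, by simpa using ha2⟩, ⟨c, hic, hjc⟩⟩)

lemma exists_min {n m : ℕ} {M : Fin n → Fin m → Bool} (hF : ¬ IsSubmatrix T2ge1 M)
    (c : Fin m) (h : ∃ i, M i c = true) :
    ∃ i, M i c = true ∧ ∀ j, M j c = true → SubRow M i j := by
  classical
  obtain ⟨i0, hi0⟩ := h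
  have hne : (Finset.univ.filter (fun i => M i c = true)).Nonempty :=
    ⟨i0, by simp [hi0]⟩
  obtain ⟨i, hi, hmin⟩ := Finset.exists_min_image _
    (fun i => (Finset.univ.filter (fun d => M i d = true)).card) hne
  simp only [Finset.mem_filter, Finset.mem_univ, true_and] at hi
  refine ⟨i, hi, ?_⟩
  intro j hj
  rcases eq_or_ne j i with rfl | hji
  · exact fun d hd => hd
  rcases L1 hF (Ne.symm hji) hi hj with h' | h'
  · exact h'
  · have hsub : (Finset.univ.filter (fun d => M j d = true)) ⊆
        (Finset.univ.filter (fun d => M i d = true)) := by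
      intro d hd
      simp only [Finset.mem_filter, Finset.mem_univ, true_and] at hd ⊢
      exact h' d hd
    have hcard := hmin j (by simp [hj])
    have heq := Finset.eq_of_subset_of_card_le hsub hcard
    intro d hd
    have : d ∈ Finset.univ.filter (fun d => M i d = true) := by simp [hd]
    rw [← heq] at this
    simpa using this

lemma card_le_forb {n m : ℕ} (M : Fin n → Fin m → Bool) (hs : Simple' M)
    (hF : ¬ IsSubmatrix T2ge1 M) : m ≤ n + 1 := by
  classical
  have key : ∀ c : Fin m, (∃ i, M i c = true) →
      ∃ i, M i c = true ∧ ∀ j, M j c = true → SubRow M i j := exists_min hF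
  let f : Fin m → Option (Fin n) := fun c =>
    if h : ∃ i, M i c = true then some (key c h).choose else none
  have hf : Function.Injective f := by
    intro c c' hcc
    by_cases h : ∃ i, M i c = true
    · by_cases h' : ∃ i, M i c' = true
      · simp only [f, dif_pos h, dif_pos h', Option.some.injEq] at hcc
        obtain ⟨hi1, hi2⟩ := (key c h).choose_spec
        obtain ⟨hi1', hi2'⟩ := (key c' h').choose_spec
        rw [hcc] at hi1 hi2
        apply hs
        intro k
        have d1 : M k c = true → M k c' = true := fun hk => hi2 k hk c' hi1'
        have d2 : M k c' = true → M k c = true := fun hk => hi2' k hk c hi1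
        cases hkc : M k c <;> cases hkc' : M k c' <;> simp_all
      · simp [f, dif_pos h, dif_neg h'] at hcc
    · by_cases h' : ∃ i, M i c' = true
      · simp [f, dif_neg h, dif_pos h'] at hcc
      · push_neg at h h'
        apply hs
        intro k
        have := h k; have := h' k
        cases hkc : M k c <;> cases hkc' : M k c' <;> simp_all
  calc m = Fintype.card (Fin m) := by simp
    _ ≤ Fintype.card (Option (Fin n)) := Fintype.card_le_of_injective f hf
    _ = n + 1 := by simp

def Wit (n : ℕ) : Fin n → Fin (n + 1) → Bool := fun i j => decide ((j : ℕ) = (i : ℕ) + 1)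

lemma wit_simple (n : ℕ) : Simple' (Wit n) := by
  intro j1 j2 h
  rcases Nat.eq_zero_or_pos (j1 : ℕ) with h1 | h1
  · rcases Nat.eq_zero_or_pos (j2 : ℕ) with h2 | h2
    · exact Fin.ext (by omega)
    · have hlt : (j2 : ℕ) - 1 < n := by omega
      have := h ⟨(j2 : ℕ) - 1, hlt⟩
      simp only [Wit, decide_eq_decide] at this
      omega
  · have hlt : (j1 : ℕ) - 1 < n := by omega
    have := h ⟨(j1 : ℕ) - 1, hlt⟩
    simp only [Wit, decide_eq_decide] at this
    exact Fin.ext (by omega)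

lemma wit_free (n : ℕ) : ¬ IsSubmatrix T2ge1 (Wit n) := by
  rw [hasF_iff]
  rintro ⟨i, j, hij, -, -, c, hc1, hc2⟩
  simp only [Wit, decide_eq_true_eq] at hc1 hc2
  exact hij (Fin.ext (by omega))

lemma addCol_lt {n m : ℕ} (M : Fin n → Fin m → Bool) (C : Fin n → Bool) (i : Fin n)
    (a : Fin (m + 1)) (h : (a : ℕ) < m) : addCol M C i a = M i ⟨a, h⟩ := by
  simp [addCol, h]

lemma addCol_last {n m : ℕ} (M : Fin n → Fin m → Bool) (C : Fin n → Bool) (i : Fin n)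
    (a : Fin (m + 1)) (h : ¬ (a : ℕ) < m) : addCol M C i a = C i := by
  simp [addCol, h]

lemma wit_sat (n : ℕ) : Saturated T2ge1 (Wit n) := by
  refine ⟨wit_simple n, wit_free n, ?_⟩
  intro C hC
  have key : ∃ i j : Fin n, i ≠ j ∧ C i = true ∧ C j = true := by
    by_contra hk
    push_neg at hk
    apply hC
    by_cases he : ∃ i, C i = true
    · obtain ⟨i, hi⟩ := he
      refine ⟨⟨(i : ℕ) + 1, by omega⟩, ?_⟩
      intro k
      rcases eq_or_ne k i with rfl | hk2
      · simp [Wit, hi]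
      · have : C k ≠ true := fun hck => hk k i hk2 hck hi
        simp only [Bool.not_eq_true] at this
        rw [this]
        simp only [Wit, decide_eq_false_iff_not]
        intro hke
        exact hk2 (Fin.ext (by omega))
    · push_neg at he
      refine ⟨⟨0, by omega⟩, ?_⟩
      intro k
      have := he k
      simp only [Bool.not_eq_true] at this
      rw [this]
      simp [Wit]
  obtain ⟨i, j, hij, hi, hj⟩ := key
  rw [hasF_iff]
  have hij' : (i : ℕ) ≠ (j : ℕ) := fun h => hij (Fin.ext h)
  refine ⟨i, j, hij, ⟨⟨(j : ℕ) + 1, by omega⟩, ?_, ?_⟩,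
    ⟨⟨(i : ℕ) + 1, by omega⟩, ?_, ?_⟩, ⟨⟨n + 1, by omega⟩, ?_, ?_⟩⟩
  · rw [addCol_lt _ _ _ _ (by simp)]
    simp only [Wit, decide_eq_false_iff_not]
    omega
  · rw [addCol_lt _ _ _ _ (by simp)]
    simp [Wit]
  · rw [addCol_lt _ _ _ _ (by simp)]
    simp [Wit]
  · rw [addCol_lt _ _ _ _ (by simp)]
    simp only [Wit, decide_eq_false_iff_not]
    omega
  · rw [addCol_last _ _ _ _ (by simp)]
    exact hi
  · rw [addCol_last _ _ _ _ (by simp)]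
    exact hj


lemma addCol_cases {n m : ℕ} (M : Fin n → Fin m → Bool) (C : Fin n → Bool)
    (i j : Fin n) (x y : Bool)
    (h : ∃ a : Fin (m + 1), addCol M C i a = x ∧ addCol M C j a = y) :
    (∃ b : Fin m, M i b = x ∧ M j b = y) ∨ (C i = x ∧ C j = y) := by
  obtain ⟨a, h1, h2⟩ := h
  by_cases ha : (a : ℕ) < m
  · exact Or.inl ⟨⟨a, ha⟩, by rwa [addCol_lt _ _ _ _ ha] at h1,
      by rwa [addCol_lt _ _ _ _ ha] at h2⟩
  · exact Or.inr ⟨by rwa [addCol_last _ _ _ _ ha] at h1,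
      by rwa [addCol_last _ _ _ _ ha] at h2⟩

lemma nsr {n m : ℕ} {M : Fin n → Fin m → Bool} {i j : Fin n}
    (h : ∃ a, M i a = false ∧ M j a = true) : ¬ SubRow M j i := by
  obtain ⟨a, h1, h2⟩ := h
  intro hs
  have := hs a h2
  simp [h1] at this

lemma addCol_free {n m : ℕ} {M : Fin n → Fin m → Bool} (hF : ¬ IsSubmatrix T2ge1 M)
    (C : Fin n → Bool)
    (hA : ∀ i j : Fin n, i ≠ j → C i = false → C j = true →
      (∃ c, M i c = true ∧ M j c = true) → SubRow M j i → SubRow M i j)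
    (hB : ∀ i j : Fin n, i ≠ j → C i = true → C j = true →
      SubRow M i j ∨ SubRow M j i) :
    ¬ IsSubmatrix T2ge1 (addCol M C) := by
  rw [hasF_iff]
  rintro ⟨i, j, hij, h01, h10, h11⟩
  replace h01 := addCol_cases M C i j _ _ h01
  replace h10 := addCol_cases M C i j _ _ h10
  replace h11 := addCol_cases M C i j _ _ h11
  rcases h11 with hc | ⟨hci, hcj⟩
  · obtain ⟨c, hc1, hc2⟩ := hc
    have d := L1 hF hij hc1 hc2
    rcases h01 with hO01 | ⟨hci, hcj⟩
    · have hnji := nsr hO01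
      rcases h10 with hO10 | ⟨hci', hcj'⟩
      · have hnij : ¬ SubRow M i j := by
          obtain ⟨b, hb1, hb2⟩ := hO10
          exact nsr ⟨b, hb2, hb1⟩
        tauto
      · have e := hA j i (Ne.symm hij) hcj' hci' ⟨c, hc2, hc1⟩
        tauto
    · have e := hA i j hij hci hcj ⟨c, hc1, hc2⟩
      rcases h10 with hO10 | ⟨hci', hcj'⟩
      · have hnij : ¬ SubRow M i j := by
          obtain ⟨b, hb1, hb2⟩ := hO10
          exact nsr ⟨b, hb2, hb1⟩
        tauto
      · simp [hci] at hci'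
  · have d := hB i j hij hci hcj
    rcases h01 with hO01 | ⟨hci', _⟩
    · have hnji := nsr hO01
      rcases h10 with hO10 | ⟨_, hcj'⟩
      · have hnij : ¬ SubRow M i j := by
          obtain ⟨b, hb1, hb2⟩ := hO10
          exact nsr ⟨b, hb2, hb1⟩
        tauto
      · simp [hcj] at hcj'
    · simp [hci] at hci'

lemma rows_eq {n m : ℕ} {M : Fin n → Fin m → Bool} {i j : Fin n}
    (h1 : SubRow M i j) (h2 : SubRow M j i) : ∀ c, M i c = M j c := by
  intro c
  cases hc : M i c <;> cases hc' : M j c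
  · rfl
  · have := h2 c hc'; simp_all
  · have := h1 c hc; simp_all
  · rfl

lemma sat_lower {n m : ℕ} (M : Fin n → Fin m → Bool) (hsat : Saturated T2ge1 M) :
    n + 1 ≤ m := by
  classical
  obtain ⟨hs, hF, hadd⟩ := hsat
  by_contra hm
  push_neg at hm
  -- Case 1: zero column missing
  by_cases h0 : IsCol M (fun _ => false)
  swap
  · exact addCol_free hF _ (fun i j _ _ h _ _ => by simp at h)
      (fun i j _ h _ => by simp at h) (hadd _ h0)
  obtain ⟨z, hz⟩ := h0
  -- Case 2: some all-zero row
  by_cases h1 : ∃ i0, ∀ c, M i0 c = false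
  · obtain ⟨i0, hi0⟩ := h1
    have hmiss : ¬ IsCol M (fun k => decide (k = i0)) := by
      rintro ⟨c, hc⟩
      have := hc i0
      simp [hi0 c] at this
    refine addCol_free hF _ ?_ ?_ (hadd _ hmiss)
    · intro i j hij hci hcj hex hji
      simp only [decide_eq_true_eq] at hcj
      subst hcj
      obtain ⟨c, hc1, hc2⟩ := hex
      simp [hi0 c] at hc2
    · intro i j hij hci hcj
      simp only [decide_eq_true_eq] at hci hcj
      exact absurd (hci.trans hcj.symm) hij
  push_neg at h1
  have h1' : ∀ i, ∃ c, M i c = true := by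
    intro i
    obtain ⟨c, hc⟩ := h1 i
    exact ⟨c, by simpa using hc⟩
  -- Case 3: two equal rows
  by_cases h2 : ∃ i0 j0 : Fin n, i0 ≠ j0 ∧ ∀ c, M i0 c = M j0 c
  · obtain ⟨i0, j0, hne, heq⟩ := h2
    have hmiss : ¬ IsCol M (fun k => decide (SubRow M i0 k ∧ k ≠ j0)) := by
      rintro ⟨c, hc⟩
      have hci : M i0 c = true := by
        rw [hc i0]
        exact decide_eq_true ⟨fun d hd => hd, hne⟩
      have hcj : M j0 c = false := by
        rw [hc j0]
        simp
      rw [heq c, hcj] at hci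
      exact absurd hci (by simp)
    refine addCol_free hF _ ?_ ?_ (hadd _ hmiss)
    · intro i j hij hci hcj hex hji
      simp only [decide_eq_true_eq, decide_eq_false_iff_not] at hci hcj
      obtain ⟨hsj, hjj0⟩ := hcj
      have hsi : SubRow M i0 i := fun c hc => hji c (hsj c hc)
      have hi_eq : i = j0 := by
        by_contra hne'
        exact hci ⟨hsi, hne'⟩
      subst hi_eq
      intro c hc
      rw [← heq c] at hc
      exact hsj c hc
    · intro i j hij hci hcj
      simp only [decide_eq_true_eq] at hci hcj
      obtain ⟨c0, hc0⟩ := h1' i0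
      exact L1 hF hij (hci.1 c0 hc0) (hcj.1 c0 hc0)
  push_neg at h2
  -- Case 4: all rows distinct and nonzero
  by_cases h3 : ∃ i0, ¬ IsCol M (fun k => decide (SubRow M i0 k))
  · obtain ⟨i0, hmiss⟩ := h3
    refine addCol_free hF _ ?_ ?_ (hadd _ hmiss)
    · intro i j hij hci hcj hex hji
      simp only [decide_eq_true_eq, decide_eq_false_iff_not] at hci hcj
      exact absurd (fun c hc => hji c (hcj c hc)) hci
    · intro i j hij hci hcj
      simp only [decide_eq_true_eq] at hci hcj
      obtain ⟨c0, hc0⟩ := h1' i0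
      exact L1 hF hij (hci c0 hc0) (hcj c0 hc0)
  push_neg at h3
  choose g hg using h3
  have hg' : ∀ i0 k, M k (g i0) = decide (SubRow M i0 k) := fun i0 k => hg i0 k
  have hgtt : ∀ i, M i (g i) = true := by
    intro i
    rw [hg' i i]
    exact decide_eq_true (fun d hd => hd)
  have inj : ∀ i i' : Fin n, g i = g i' → i = i' := by
    intro i i' hoo
    by_contra hne'
    have e1 := hg' i i'
    rw [hoo] at e1
    have hs1 : SubRow M i i' := of_decide_eq_true (e1.symm.trans (hgtt i'))
    have e3 := hg' i' i
    rw [← hoo] at e3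
    have hs2 : SubRow M i' i := of_decide_eq_true (e3.symm.trans (hgtt i))
    obtain ⟨c, hc⟩ := h2 i i' hne'
    exact hc (rows_eq hs1 hs2 c)
  have hzne : ∀ i, g i ≠ z := by
    intro i he
    have t := hgtt i
    rw [he] at t
    have := hz i
    simp_all
  have hcard : Fintype.card (Option (Fin n)) ≤ Fintype.card (Fin m) := by
    apply Fintype.card_le_of_injective (fun o => o.elim z g)
    intro o o' hoo
    cases o with
    | none =>
      cases o' with
      | none => rfl
      | some i => exact ((hzne i) (hoo.symm : g i = z)).elim
    | some i =>
      cases o' with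
      | none => exact ((hzne i) (hoo : g i = z)).elim
      | some i' => exact congrArg some (inj i i' hoo)
  simp at hcard
  omega

theorem stmt_16 (n : ℕ) (hn : 2 ≤ n) :
    IsLeast (satSet T2ge1 n) (n + 1) ∧ IsGreatest (forbSet T2ge1 n) (n + 1) := by
  constructor
  · constructor
    · exact ⟨Wit n, wit_sat n⟩
    · rintro m ⟨M, hM⟩
      exact sat_lower M hM
  · constructor
    · exact ⟨Wit n, wit_simple n, wit_free n⟩
    · rintro m ⟨M, hsimp, hfree⟩
      exact card_le_forb M hsimp hfree
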